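/- In the B-type braid group B(B_{n+1}) with n≥2, the following identity holds: tσ_1⋯σ_{n-2}σ_{n-1}σ_{n-2}^{-1}⋯σ_1^{-1}t^{-1} = σ_n · (tσ_1⋯σ_{n-1}σ_nσ_{n-1}^{-1}⋯σ_1^{-1}t^{-1}) · σ_n^{-1}. (Equivalently, the image under the tower injection y_n: B(B_n)→B(B_{n+1}) of the element a_n of B(B_n) equals σ_n a_{n+1} σ_n^{-1}, where a_{m} denotes φ_mσ_{m-1}φ_m^{-1} with φ_m = tσ_1⋯σ_{m-1}.) -/
import Mathlib


/-- Relators of the `B`-type braid group `B(B_{n+1})`: generator `some i` (`i : Fin n`)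
stands for `σ_{i+1}`, and `none` stands for `t`. -/
def braidRelsB (n : ℕ) : Set (FreeGroup (Option (Fin n))) :=
  { r | (∃ i j : Fin n, (i : ℕ) + 2 ≤ (j : ℕ) ∧
          r = FreeGroup.of (some i) * FreeGroup.of (some j) *
              (FreeGroup.of (some j) * FreeGroup.of (some i))⁻¹) ∨
        (∃ i j : Fin n, (j : ℕ) = (i : ℕ) + 1 ∧
          r = FreeGroup.of (some i) * FreeGroup.of (some j) * FreeGroup.of (some i) *
              (FreeGroup.of (some j) * FreeGroup.of (some i) * FreeGroup.of (some j))⁻¹) ∨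
        (∃ i : Fin n, 1 ≤ (i : ℕ) ∧
          r = FreeGroup.of (some i) * FreeGroup.of none *
              (FreeGroup.of none * FreeGroup.of (some i))⁻¹) ∨
        (∃ i : Fin n, (i : ℕ) = 0 ∧
          r = FreeGroup.of (some i) * FreeGroup.of none * FreeGroup.of (some i) *
              FreeGroup.of none *
              (FreeGroup.of none * FreeGroup.of (some i) * FreeGroup.of none *
                FreeGroup.of (some i))⁻¹) }

/-- The `B`-type braid group `B(B_{n+1})`, with generators `σ_1, …, σ_n` and `t`. -/
abbrev BraidB (n : ℕ) : Type := PresentedGroup (braidRelsB n)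

/-- `φ_{n+1} = t σ_1 σ_2 ⋯ σ_n` in `B(B_{n+1})`. -/
noncomputable def phiB (n : ℕ) : BraidB n :=
  PresentedGroup.of none *
    ((List.finRange n).map fun i => (PresentedGroup.of (some i) : BraidB n)).prod

/-- `a_{n+1} = φ_{n+1} σ_n φ_{n+1}⁻¹` in `B(B_{n+1})`. -/
noncomputable def aB (n : ℕ) (h : 0 < n) : BraidB n :=
  phiB n * PresentedGroup.of (some (⟨n - 1, by omega⟩ : Fin n)) * (phiB n)⁻¹

namespace Stmt15Aux

lemma rel_eq_one {n : ℕ} {r : FreeGroup (Option (Fin n))} (h : r ∈ braidRelsB n) :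
    (QuotientGroup.mk' (Subgroup.normalClosure (braidRelsB n)) r : BraidB n) = 1 := by
  rw [QuotientGroup.mk'_apply, QuotientGroup.eq_one_iff]
  exact Subgroup.subset_normalClosure h

lemma pi_of {n : ℕ} (x : Option (Fin n)) :
    (QuotientGroup.mk' (Subgroup.normalClosure (braidRelsB n)) (FreeGroup.of x) : BraidB n)
      = PresentedGroup.of x := rfl

lemma comm_far {n : ℕ} {i j : Fin n} (h : (i : ℕ) + 2 ≤ (j : ℕ)) :
    Commute (PresentedGroup.of (some i) : BraidB n) (PresentedGroup.of (some j)) := by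
  have h1 := rel_eq_one (n := n) (Or.inl ⟨i, j, h, rfl⟩)
  simp only [map_mul, map_inv, pi_of, mul_inv_eq_one] at h1
  exact h1

lemma braid {n : ℕ} {i j : Fin n} (h : (j : ℕ) = (i : ℕ) + 1) :
    PresentedGroup.of (some i) * PresentedGroup.of (some j) * PresentedGroup.of (some i)
      = (PresentedGroup.of (some j) : BraidB n) * PresentedGroup.of (some i) *
        PresentedGroup.of (some j) := by
  have h1 := rel_eq_one (n := n) (Or.inr (Or.inl ⟨i, j, h, rfl⟩))
  simp only [map_mul, map_inv, pi_of, mul_inv_eq_one] at h1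
  exact h1

lemma comm_t {n : ℕ} {i : Fin n} (h : 1 ≤ (i : ℕ)) :
    Commute (PresentedGroup.of (some i) : BraidB n) (PresentedGroup.of none) := by
  have h1 := rel_eq_one (n := n) (Or.inr (Or.inr (Or.inl ⟨i, h, rfl⟩)))
  simp only [map_mul, map_inv, pi_of, mul_inv_eq_one] at h1
  exact h1

lemma key {G : Type*} [Group G] (t P a b : G) (h1 : Commute b t) (h2 : Commute b P)
    (h3 : a * b * a = b * a * b) :
    t * P * a * P⁻¹ * t⁻¹ = b * (t * (P * a) * b * (P * a)⁻¹ * t⁻¹) * b⁻¹ := by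
  have h4 : a * b * a⁻¹ = b⁻¹ * a * b := by
    calc a * b * a⁻¹ = b⁻¹ * (b * a * b) * a⁻¹ := by group
      _ = b⁻¹ * (a * b * a) * a⁻¹ := by rw [h3]
      _ = b⁻¹ * a * b := by group
  have e1 : b * (t * (P * a) * b * (P * a)⁻¹ * t⁻¹) * b⁻¹
      = b * t * P * (a * b * a⁻¹) * P⁻¹ * t⁻¹ * b⁻¹ := by group
  rw [e1, h4]
  have e2 : b * t * P * (b⁻¹ * a * b) * P⁻¹ * t⁻¹ * b⁻¹
      = (b * t) * (P * b⁻¹) * a * (b * P⁻¹) * (t⁻¹ * b⁻¹) := by group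
  rw [e2, h1.eq, ← h2.inv_left.eq, h2.inv_right.eq, h1.symm.inv_left.inv_right.eq]
  group

lemma mem_take_finRange {n m : ℕ} {i : Fin n} (h : i ∈ (List.finRange n).take m) :
    (i : ℕ) < m := by
  obtain ⟨k, hk, he⟩ := List.getElem_of_mem h
  have hk' : k < m := by
    have := hk
    simp only [List.length_take, List.length_finRange] at this
    omega
  have hkn : k < (List.finRange n).length := by
    simp only [List.length_take, List.length_finRange] at hk ⊢; omega
  have heq : ((List.finRange n).take m)[k] = (List.finRange n)[k]'hkn := List.getElem_take ..
  rw [heq, List.getElem_finRange] at he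
  subst he
  simpa using hk'

end Stmt15Aux

theorem stmt_15 (n : ℕ) (hn : 2 ≤ n) :
    PresentedGroup.of none *
        (((List.finRange n).take (n - 2)).map
          fun i => (PresentedGroup.of (some i) : BraidB n)).prod *
        PresentedGroup.of (some (⟨n - 2, by omega⟩ : Fin n)) *
        ((((List.finRange n).take (n - 2)).map
          fun i => (PresentedGroup.of (some i) : BraidB n)).prod)⁻¹ *
        (PresentedGroup.of none)⁻¹ =
      PresentedGroup.of (some (⟨n - 1, by omega⟩ : Fin n)) *
        (PresentedGroup.of none *
          (((List.finRange n).take (n - 1)).map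
            fun i => (PresentedGroup.of (some i) : BraidB n)).prod *
          PresentedGroup.of (some (⟨n - 1, by omega⟩ : Fin n)) *
          ((((List.finRange n).take (n - 1)).map
            fun i => (PresentedGroup.of (some i) : BraidB n)).prod)⁻¹ *
          (PresentedGroup.of none)⁻¹) *
        (PresentedGroup.of (some (⟨n - 1, by omega⟩ : Fin n)))⁻¹ := by
  open Stmt15Aux in
  have hsplit : (List.finRange n).take (n - 1)
      = (List.finRange n).take (n - 2) ++ [(⟨n - 2, by omega⟩ : Fin n)] := by
    have h1 : n - 1 = (n - 2) + 1 := by omega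
    rw [h1, List.take_succ]
    congr 1
    rw [List.getElem?_eq_getElem (by simp; omega), List.getElem_finRange]
    rfl
  rw [hsplit, List.map_append, List.prod_append, List.map_singleton, List.prod_singleton]
  exact Stmt15Aux.key (PresentedGroup.of none)
    ((((List.finRange n).take (n - 2)).map
      fun i => (PresentedGroup.of (some i) : BraidB n)).prod)
    (PresentedGroup.of (some (⟨n - 2, by omega⟩ : Fin n)))
    (PresentedGroup.of (some (⟨n - 1, by omega⟩ : Fin n)))
    (Stmt15Aux.comm_t (by simp; omega))
    (Commute.list_prod_right _ _ (by
      intro x hx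
      simp only [List.mem_map] at hx
      obtain ⟨i, hi, rfl⟩ := hx
      have := Stmt15Aux.mem_take_finRange hi
      exact (Stmt15Aux.comm_far (i := i) (by simp; omega)).symm))
    (Stmt15Aux.braid (by simp; omega))
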